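/- Let p and q be strictly positive, twice continuously differentiable probability densities on [0,1]^d. Then ∫_{[0,1]^d} p(x) h(x,q) dx − ∫_{[0,1]^d} p(x) h(x,p) dx = (1/2) ∫_{[0,1]^d} p(x) Σ_{i=1}^d x_i²(1−x_i)² (∂_i log p(x) − ∂_i log q(x))² dx. In particular ∫ p(x) h(x,q) dx ≥ ∫ p(x) h(x,p) dx, with equality if and only if q = p on [0,1]^d; that is, the bounded-domain Hyvärinen score h is a proper scoring rule for this class of densities. (Proposition 1.) -/

import Mathlib

open MeasureTheory

/-- Partial derivative in coordinate `i`. -/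
noncomputable def pd {d : ℕ} (i : Fin d) (f : (Fin d → ℝ) → ℝ) (x : Fin d → ℝ) : ℝ :=
  fderiv ℝ f x (Pi.single i 1)

/-- Second partial derivative in coordinate `i`. -/
noncomputable def pd2 {d : ℕ} (i : Fin d) (f : (Fin d → ℝ) → ℝ) : (Fin d → ℝ) → ℝ :=
  pd i (pd i f)

/-- Bounded-domain Hyvärinen score on `[0,1]^d`:
`h(x,q) = ∑ i [ (1/2) x_i²(1−x_i)² (∂_i log q)² − 2(2x_i−1)x_i(1−x_i) ∂_i log q
  + x_i²(1−x_i)² ∂_i² log q ]`. -/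
noncomputable def hScore {d : ℕ} (q : (Fin d → ℝ) → ℝ) (x : Fin d → ℝ) : ℝ :=
  ∑ i : Fin d,
    ((1/2) * (x i)^2 * (1 - x i)^2 * (pd i (fun y => Real.log (q y)) x)^2
      - 2 * (2 * x i - 1) * (x i) * (1 - x i) * pd i (fun y => Real.log (q y)) x
      + (x i)^2 * (1 - x i)^2 * pd2 i (fun y => Real.log (q y)) x)

/-!
With `wᵢ(x) = xᵢ²(1 - xᵢ)²` and `s_f = ∂ᵢ log f`, a pointwise computation in the open
cube gives `p h(·,q) - p h(·,p) = ½ p ∑ᵢ wᵢ (s_p - s_q)² + ∑ᵢ ∂ᵢ (wᵢ p (s_q - s_p))`.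
The flux `wᵢ p (s_q - s_p)` vanishes on the faces `xᵢ = 0, 1`, so by the divergence theorem each
`∂ᵢ`-term integrates to zero. If the weighted Fisher divergence vanishes, continuity forces
`∇ log (q / p) = 0` in the open cube, so `q = e^c p`, and normalisation gives `c = 0`.
-/

open MeasureTheory Set Filter Topology

variable {d : ℕ}

section PartialDerivative

variable {i : Fin d} {f g : (Fin d → ℝ) → ℝ} {x : Fin d → ℝ}

lemma pd_mul (hf : DifferentiableAt ℝ f x) (hg : DifferentiableAt ℝ g x) :
    pd i (fun y => f y * g y) x = pd i f x * g x + f x * pd i g x := by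
  simp only [pd, fderiv_fun_mul hf hg, add_apply, smul_apply, smul_eq_mul]
  ring

lemma pd_sub (hf : DifferentiableAt ℝ f x) (hg : DifferentiableAt ℝ g x) :
    pd i (fun y => f y - g y) x = pd i f x - pd i g x := by
  simp only [pd, fderiv_fun_sub hf hg, sub_apply]

lemma pd_comp_apply {φ : ℝ → ℝ} (hφ : DifferentiableAt ℝ φ (x i)) :
    pd i (fun y => φ (y i)) x = deriv φ (x i) := by
  have h := hφ.hasDerivAt.comp_hasFDerivAt x (hasFDerivAt_apply (𝕜 := ℝ) i x)
  show fderiv ℝ (φ ∘ fun y : Fin d → ℝ => y i) x (Pi.single i 1) = _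
  simp [h.fderiv]

lemma pd_log (hf : DifferentiableAt ℝ f x) (hx : f x ≠ 0) :
    pd i (fun y => Real.log (f y)) x = pd i f x / f x := by
  simp [pd, (hf.hasFDerivAt.log hx).fderiv, div_eq_inv_mul]

lemma ContDiffAt.differentiableAt_pd (hf : ContDiffAt ℝ 2 f x) :
    DifferentiableAt ℝ (pd i f) x :=
  ((hf.fderiv_right le_rfl).differentiableAt one_ne_zero).clm_apply (differentiableAt_const _)

lemma Filter.EventuallyEq.pd_eq (h : f =ᶠ[𝓝 x] g) : pd i f x = pd i g x := by
  rw [pd, pd, h.fderiv_eq]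

lemma Filter.EventuallyEq.pd2_eq (h : f =ᶠ[𝓝 x] g) : pd2 i f x = pd2 i g x :=
  Filter.EventuallyEq.pd_eq (h.eventuallyEq_nhds.mono fun _ hy => hy.pd_eq)

lemma fderiv_eq_of_forall_pd_eq (h : ∀ i, pd i f x = pd i g x) :
    fderiv ℝ f x = fderiv ℝ g x := by
  refine ContinuousLinearMap.coe_injective (LinearMap.pi_ext fun i t => ?_)
  rw [ContinuousLinearMap.coe_coe, ContinuousLinearMap.coe_coe, ← mul_one t, ← smul_eq_mul,
    Pi.single_smul', map_smul, map_smul]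
  exact congrArg (t • ·) (h i)

end PartialDerivative

lemma ae_restrict_mem_interior_of_null_frontier {E : Type*} [TopologicalSpace E]
    [MeasurableSpace E] [OpensMeasurableSpace E] {μ : Measure E} {s : Set E}
    (hfr : μ (frontier s) = 0) : ∀ᵐ x ∂μ.restrict s, x ∈ interior s := by
  rw [← Measure.restrict_congr_set (interior_ae_eq_of_null_frontier hfr)]
  exact ae_restrict_mem isOpen_interior.measurableSet

lemma eqOn_zero_interior_of_setIntegral_eq_zero {E : Type*} [TopologicalSpace E]
    [MeasurableSpace E] [OpensMeasurableSpace E] {μ : Measure E} [μ.IsOpenPosMeasure]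
    {s : Set E} {f : E → ℝ} (hs : MeasurableSet s) (hf : IntegrableOn f s μ)
    (hf0 : ∀ x ∈ s, 0 ≤ f x) (hfc : ContinuousOn f (interior s))
    (h : ∫ x in s, f x ∂μ = 0) :
    EqOn f 0 (interior s) := by
  have hae := (setIntegral_eq_zero_iff_of_nonneg_ae ((ae_restrict_iff' hs).2
    (Eventually.of_forall hf0)) hf).1 h
  exact Measure.eqOn_open_of_ae_eq (ae_restrict_of_ae_restrict_of_subset interior_subset hae)
    isOpen_interior hfc continuousOn_const

lemma eqOn_of_eqOn_const_mul_of_setIntegral_eq_one {E : Type*} [TopologicalSpace E]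
    [MeasurableSpace E] {μ : Measure E} {s t : Set E} {p q : E → ℝ} {c : ℝ}
    (hs : MeasurableSet s)
    (hp : ContinuousOn p s) (hq : ContinuousOn q s) (hts : t ⊆ s) (hst : s ⊆ closure t)
    (hqp : EqOn q (fun x => c * p x) t) (hpint : ∫ x in s, p x ∂μ = 1)
    (hqint : ∫ x in s, q x ∂μ = 1) : EqOn q p s := by
  have hqp' := hqp.of_subset_closure hq (continuousOn_const.mul hp) hts hst
  have hc : c = 1 := by
    rw [setIntegral_congr_fun hs hqp', integral_const_mul, hpint, mul_one] at hqint
    exact hqint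
  intro x hx
  simp [hqp' hx, hc]

section ContinuousExtension

/- The integrands are built from `pd`, i.e. from `fderiv`, which takes junk values on the
boundary of the cube, where the densities are only differentiable within the cube. They agree on
the interior, a set of full measure, with functions continuous on the closed cube built from
`fderivWithin`. -/

variable {E : Type*} [TopologicalSpace E] {s : Set E} {f g : E → ℝ}

def HasContinuousExtension (s : Set E) (f : E → ℝ) : Prop :=
  ∃ g : E → ℝ, ContinuousOn g s ∧ EqOn f g (interior s)

namespace HasContinuousExtension

lemma of_continuousOn (hf : ContinuousOn f s) : HasContinuousExtension s f :=
  ⟨f, hf, fun _ _ => rfl⟩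

lemma add (hf : HasContinuousExtension s f) (hg : HasContinuousExtension s g) :
    HasContinuousExtension s (fun x => f x + g x) := by
  obtain ⟨f', hf', hff'⟩ := hf
  obtain ⟨g', hg', hgg'⟩ := hg
  exact ⟨fun x => f' x + g' x, hf'.add hg', fun x hx => by simp [hff' hx, hgg' hx]⟩

lemma sub (hf : HasContinuousExtension s f) (hg : HasContinuousExtension s g) :
    HasContinuousExtension s (fun x => f x - g x) := by
  obtain ⟨f', hf', hff'⟩ := hf
  obtain ⟨g', hg', hgg'⟩ := hg
  exact ⟨fun x => f' x - g' x, hf'.sub hg', fun x hx => by simp [hff' hx, hgg' hx]⟩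

lemma mul (hf : HasContinuousExtension s f) (hg : HasContinuousExtension s g) :
    HasContinuousExtension s (fun x => f x * g x) := by
  obtain ⟨f', hf', hff'⟩ := hf
  obtain ⟨g', hg', hgg'⟩ := hg
  exact ⟨fun x => f' x * g' x, hf'.mul hg', fun x hx => by simp [hff' hx, hgg' hx]⟩

lemma pow (hf : HasContinuousExtension s f) (n : ℕ) :
    HasContinuousExtension s (fun x => f x ^ n) := by
  obtain ⟨f', hf', hff'⟩ := hf
  exact ⟨fun x => f' x ^ n, hf'.pow n, fun x hx => by simp [hff' hx]⟩

lemma sum {ι : Type*} (t : Finset ι) {f : ι → E → ℝ}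
    (hf : ∀ i ∈ t, HasContinuousExtension s (f i)) :
    HasContinuousExtension s (fun x => ∑ i ∈ t, f i x) := by
  choose g hg hfg using hf
  refine ⟨fun x => ∑ i ∈ t.attach, g i i.2 x,
    continuousOn_finsetSum _ fun i _ => hg i i.2, fun x hx => ?_⟩
  simp only [← Finset.sum_attach t (fun i => f i x)]
  exact Finset.sum_congr rfl fun i _ => hfg i i.2 hx

lemma congr (hf : HasContinuousExtension s f) (hfg : EqOn g f (interior s)) :
    HasContinuousExtension s g := by
  obtain ⟨f', hf', hff'⟩ := hf
  exact ⟨f', hf', fun x hx => (hfg hx).trans (hff' hx)⟩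

lemma continuousOn_interior (hf : HasContinuousExtension s f) : ContinuousOn f (interior s) := by
  obtain ⟨g, hg, hfg⟩ := hf
  exact (hg.mono interior_subset).congr hfg

lemma integrableOn [MeasurableSpace E] [OpensMeasurableSpace E] [T2Space E]
    {μ : Measure E} [IsFiniteMeasureOnCompacts μ] (hf : HasContinuousExtension s f)
    (hs : IsCompact s) (hfr : μ (frontier s) = 0) : IntegrableOn f s μ := by
  obtain ⟨g, hg, hfg⟩ := hf
  refine (hg.integrableOn_compact hs).congr_fun_ae ?_
  filter_upwards [ae_restrict_mem_interior_of_null_frontier hfr] with x hx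
  exact (hfg hx).symm

end HasContinuousExtension

end ContinuousExtension

section WithinDerivative

variable {s : Set (Fin d → ℝ)} {i : Fin d} {f : (Fin d → ℝ) → ℝ} {x : Fin d → ℝ}

noncomputable def pdWithin (s : Set (Fin d → ℝ)) (i : Fin d) (f : (Fin d → ℝ) → ℝ)
    (x : Fin d → ℝ) : ℝ :=
  fderivWithin ℝ f s x (Pi.single i 1)

lemma pdWithin_of_mem_nhds (h : s ∈ 𝓝 x) : pdWithin s i f x = pd i f x := by
  rw [pdWithin, pd, fderivWithin_of_mem_nhds h]

lemma pdWithin_eventuallyEq_pd (hx : x ∈ interior s) : pdWithin s i f =ᶠ[𝓝 x] pd i f :=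
  eventually_mem_nhds_iff.2 (mem_interior_iff_mem_nhds.1 hx) |>.mono
    fun _ hy => pdWithin_of_mem_nhds hy

lemma ContDiffOn.pdWithin {m n : WithTop ℕ∞} (hf : ContDiffOn ℝ n f s)
    (hs : UniqueDiffOn ℝ s) (hmn : m + 1 ≤ n) : ContDiffOn ℝ m (pdWithin s i f) s :=
  (hf.fderivWithin hs hmn).clm_apply contDiffOn_const

lemma hasContinuousExtension_pd (hf : ContDiffOn ℝ 1 f s) (hs : UniqueDiffOn ℝ s) :
    HasContinuousExtension s (pd i f) :=
  ⟨pdWithin s i f, (hf.pdWithin hs (m := 0) (by norm_num)).continuousOn,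
    fun _ hx => (pdWithin_eventuallyEq_pd hx).eq_of_nhds.symm⟩

lemma hasContinuousExtension_pd2 (hf : ContDiffOn ℝ 2 f s) (hs : UniqueDiffOn ℝ s) :
    HasContinuousExtension s (pd2 i f) := by
  refine ⟨pdWithin s i (pdWithin s i f),
    ((hf.pdWithin hs (m := 1) (by norm_num)).pdWithin hs (m := 0) (by norm_num)).continuousOn,
    fun x hx => ?_⟩
  rw [pdWithin_of_mem_nhds (mem_interior_iff_mem_nhds.1 hx), pd2]
  exact (pdWithin_eventuallyEq_pd hx).pd_eq.symm

end WithinDerivative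

section Box

variable {a b : Fin d → ℝ}

lemma interior_Icc_pi (a b : Fin d → ℝ) :
    interior (Icc a b) = pi univ fun j => Ioo (a j) (b j) := by
  simp only [← pi_univ_Icc, interior_pi_set finite_univ, interior_Icc]

lemma uniqueDiffOn_Icc_pi (hab : ∀ j, a j < b j) : UniqueDiffOn ℝ (Icc a b) := by
  rw [← pi_univ_Icc]
  exact UniqueDiffOn.pi fun j _ => uniqueDiffOn_Icc (hab j)

lemma closure_interior_Icc_pi (hab : ∀ j, a j < b j) :
    closure (interior (Icc a b)) = Icc a b := by
  simp only [interior_Icc_pi, closure_pi_set, closure_Ioo (hab _).ne, pi_univ_Icc]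

lemma integral_pdWithin_eq_zero_of_eq_zero_on_faces (hab : ∀ j, a j < b j)
    {Φ : (Fin d → ℝ) → ℝ} (hΦ : ContDiffOn ℝ 1 Φ (Icc a b)) (i : Fin d)
    (ha : ∀ x, x i = a i → Φ x = 0) (hb : ∀ x, x i = b i → Φ x = 0) :
    ∫ x in Icc a b, pdWithin (Icc a b) i Φ x = 0 := by
  obtain ⟨n, rfl⟩ : ∃ n, d = n + 1 := ⟨d - 1, by have := i.pos; omega⟩
  set F : Fin (n + 1) → (Fin (n + 1) → ℝ) → (Fin (n + 1) → ℝ) →L[ℝ] ℝ :=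
    Pi.single i (fderivWithin ℝ Φ (Icc a b)) with hF
  have hsum : ∀ x, ∑ j, F j x (Pi.single j 1) = pdWithin (Icc a b) i Φ x := fun x => by
    rw [Fintype.sum_eq_single i fun j hj => by simp [hF, Pi.single_eq_of_ne hj]]
    simp [hF, pdWithin]
  have hdiv := integral_divergence_of_hasFDerivAt_off_countable' a b (fun j => (hab j).le)
    (Pi.single i Φ) F ∅ countable_empty
    (fun j => by
      rcases eq_or_ne j i with rfl | hj
      · simpa using hΦ.continuousOn
      · rw [Pi.single_eq_of_ne hj]
        exact continuousOn_const)
    (fun x hx j => by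
      have hx' : Icc a b ∈ 𝓝 x := by
        rw [← mem_interior_iff_mem_nhds, interior_Icc_pi]; exact hx.1
      rcases eq_or_ne j i with rfl | hj
      · simpa [hF, fderivWithin_of_mem_nhds hx'] using
          ((hΦ.differentiableOn one_ne_zero x (mem_of_mem_nhds hx')).differentiableAt
            hx').hasFDerivAt
      · rw [hF, Pi.single_eq_of_ne hj, Pi.single_eq_of_ne hj]
        exact hasFDerivAt_const 0 x)
    (by simpa only [hsum] using ((hΦ.pdWithin (uniqueDiffOn_Icc_pi hab) (m := 0)
      le_rfl).continuousOn.integrableOn_compact isCompact_Icc))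
  rw [← funext hsum, hdiv]
  refine Finset.sum_eq_zero fun j _ => ?_
  rcases eq_or_ne j i with rfl | hj
  · simp [ha _ (Fin.insertNth_apply_same _ _ _), hb _ (Fin.insertNth_apply_same _ _ _)]
  · simp [Pi.single_eq_of_ne hj]

theorem integral_pd_eq_zero_of_eq_zero_on_faces (hab : ∀ j, a j < b j)
    {Φ : (Fin d → ℝ) → ℝ} (hΦ : ContDiffOn ℝ 1 Φ (Icc a b)) (i : Fin d)
    (ha : ∀ x, x i = a i → Φ x = 0) (hb : ∀ x, x i = b i → Φ x = 0) :
    ∫ x in Icc a b, pd i Φ x = 0 := by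
  rw [← integral_pdWithin_eq_zero_of_eq_zero_on_faces hab hΦ i ha hb]
  refine integral_congr_ae ?_
  filter_upwards [ae_restrict_mem_interior_of_null_frontier
    ((convex_Icc a b).addHaar_frontier volume)] with x hx
  exact (pdWithin_of_mem_nhds (mem_interior_iff_mem_nhds.1 hx)).symm

end Box

section Score

variable {p q : (Fin d → ℝ) → ℝ} {x : Fin d → ℝ}

noncomputable def scoreFlux (p q : (Fin d → ℝ) → ℝ) (i : Fin d) (y : Fin d → ℝ) : ℝ :=
  (y i) ^ 2 * (1 - y i) ^ 2 *
    (p y * (pd i (fun z => Real.log (q z)) y - pd i (fun z => Real.log (p z)) y))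

noncomputable def weightedFisher (p q : (Fin d → ℝ) → ℝ) (x : Fin d → ℝ) : ℝ :=
  p x * ∑ i : Fin d, (x i) ^ 2 * (1 - x i) ^ 2
    * (pd i (fun y => Real.log (p y)) x - pd i (fun y => Real.log (q y)) x) ^ 2

lemma weightedFisher_nonneg (hpx : 0 ≤ p x) : 0 ≤ weightedFisher p q x :=
  mul_nonneg hpx (Finset.sum_nonneg fun _ _ => by positivity)

lemma pd_log_eq_of_weightedFisher_eq_zero (hx : ∀ i, 0 < x i ∧ x i < 1) (hpx : 0 < p x)
    (h : weightedFisher p q x = 0) (i : Fin d) :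
    pd i (fun y => Real.log (p y)) x = pd i (fun y => Real.log (q y)) x := by
  have hsum := (mul_eq_zero.1 h).resolve_left hpx.ne'
  have hterm := (Finset.sum_eq_zero_iff_of_nonneg fun _ _ => by positivity).1 hsum i
    (Finset.mem_univ i)
  have hw : (x i) ^ 2 * (1 - x i) ^ 2 ≠ 0 := by
    have := hx i
    exact mul_ne_zero (pow_ne_zero _ this.1.ne') (pow_ne_zero _ (by linarith))
  exact sub_eq_zero.1 (pow_eq_zero_iff two_ne_zero |>.1 ((mul_eq_zero.1 hterm).resolve_left hw))

lemma pd_weight (i : Fin d) :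
    pd i (fun y => (y i) ^ 2 * (1 - y i) ^ 2) x = 2 * x i * (1 - x i) * (1 - 2 * x i) := by
  have h := (hasDerivAt_pow 2 (x i)).fun_mul (((hasDerivAt_id' (x i)).const_sub 1).fun_pow 2)
  rw [pd_comp_apply h.differentiableAt, h.deriv]
  norm_num
  ring

lemma pd_scoreFlux (hp : ContDiffAt ℝ 2 p x) (hq : ContDiffAt ℝ 2 q x) (hpx : p x ≠ 0)
    (hqx : q x ≠ 0) (i : Fin d) :
    pd i (scoreFlux p q i) x = p x *
      (2 * x i * (1 - x i) * (1 - 2 * x i)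
          * (pd i (fun y => Real.log (q y)) x - pd i (fun y => Real.log (p y)) x)
        + (x i) ^ 2 * (1 - x i) ^ 2
          * (pd i (fun y => Real.log (p y)) x
              * (pd i (fun y => Real.log (q y)) x - pd i (fun y => Real.log (p y)) x)
            + pd2 i (fun y => Real.log (q y)) x - pd2 i (fun y => Real.log (p y)) x)) := by
  have hA := (hq.log hqx).differentiableAt_pd (i := i)
  have hB := (hp.log hpx).differentiableAt_pd (i := i)
  have hw : DifferentiableAt ℝ (fun y : Fin d → ℝ => (y i) ^ 2 * (1 - y i) ^ 2) x := by
    fun_prop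
  have hp' := hp.differentiableAt two_ne_zero
  have hAB : DifferentiableAt ℝ (fun y => pd i (fun z => Real.log (q z)) y
      - pd i (fun z => Real.log (p z)) y) x := hA.sub hB
  have h := pd_mul (i := i) hw (hp'.fun_mul hAB)
  rw [pd_mul hp' hAB, pd_sub hA hB, pd_weight] at h
  unfold scoreFlux
  rw [h, pd2, pd2, pd_log hp' hpx]
  field_simp
  ring

theorem mul_hScore_sub_mul_hScore (hp : ContDiffAt ℝ 2 p x) (hq : ContDiffAt ℝ 2 q x)
    (hpx : p x ≠ 0) (hqx : q x ≠ 0) :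
    p x * hScore q x - p x * hScore p x
      = weightedFisher p q x / 2 + ∑ i, pd i (scoreFlux p q i) x := by
  simp only [hScore, weightedFisher, pd_scoreFlux hp hq hpx hqx, Finset.mul_sum, Finset.sum_div,
    ← Finset.sum_sub_distrib, ← Finset.sum_add_distrib]
  refine Finset.sum_congr rfl fun i _ => ?_
  ring

lemma hScore_congr (h : q =ᶠ[𝓝 x] p) : hScore q x = hScore p x := by
  have hlog : (fun y => Real.log (q y)) =ᶠ[𝓝 x] fun y => Real.log (p y) := h.fun_comp Real.log
  simp only [hScore, hlog.pd_eq, hlog.pd2_eq]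

end Score

section ScoreOnBox

variable {p q f : (Fin d → ℝ) → ℝ} {s : Set (Fin d → ℝ)}

lemma hasContinuousExtension_mul_hScore (hs : UniqueDiffOn ℝ s) (hp : ContinuousOn p s)
    (hf : ContDiffOn ℝ 2 f s) (hf0 : ∀ x ∈ s, f x ≠ 0) :
    HasContinuousExtension s (fun x => p x * hScore f x) := by
  have hlog := hf.log hf0
  have hc : ∀ c : (Fin d → ℝ) → ℝ, Continuous c → HasContinuousExtension s c :=
    fun c hc => .of_continuousOn hc.continuousOn
  refine (HasContinuousExtension.of_continuousOn hp).mul (.sum _ fun i _ => ?_)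
  have h1 := hasContinuousExtension_pd (i := i) (hlog.of_le one_le_two) hs
  have h2 := hasContinuousExtension_pd2 (i := i) hlog hs
  exact (((hc _ (by fun_prop)).mul (h1.pow 2)).sub ((hc _ (by fun_prop)).mul h1)).add
    ((hc _ (by fun_prop)).mul h2)

lemma hasContinuousExtension_weightedFisher (hs : UniqueDiffOn ℝ s) (hp : ContDiffOn ℝ 2 p s)
    (hq : ContDiffOn ℝ 2 q s) (hp0 : ∀ x ∈ s, p x ≠ 0) (hq0 : ∀ x ∈ s, q x ≠ 0) :
    HasContinuousExtension s (weightedFisher p q) := by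
  refine (HasContinuousExtension.of_continuousOn hp.continuousOn).mul (.sum _ fun i _ => ?_)
  have h1p := hasContinuousExtension_pd (i := i) ((hp.log hp0).of_le one_le_two) hs
  have h1q := hasContinuousExtension_pd (i := i) ((hq.log hq0).of_le one_le_two) hs
  exact (HasContinuousExtension.of_continuousOn (by fun_prop)).mul ((h1p.sub h1q).pow 2)

lemma exists_contDiffOn_eventuallyEq_scoreFlux (hs : UniqueDiffOn ℝ s) (hp : ContDiffOn ℝ 2 p s)
    (hq : ContDiffOn ℝ 2 q s) (hp0 : ∀ x ∈ s, p x ≠ 0) (hq0 : ∀ x ∈ s, q x ≠ 0)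
    (i : Fin d) :
    ∃ Φ : (Fin d → ℝ) → ℝ, ContDiffOn ℝ 1 Φ s ∧ (∀ y, y i = 0 → Φ y = 0) ∧
      (∀ y, y i = 1 → Φ y = 0) ∧ ∀ x ∈ interior s, scoreFlux p q i =ᶠ[𝓝 x] Φ := by
  refine ⟨fun y => (y i) ^ 2 * (1 - y i) ^ 2 * (p y * (pdWithin s i (fun z => Real.log (q z)) y
      - pdWithin s i (fun z => Real.log (p z)) y)), ?_, fun y hy => by simp [hy],
    fun y hy => by simp [hy], fun x hx => ?_⟩
  · have hlp := (hp.log hp0).pdWithin hs (m := 1) (i := i) (by norm_num)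
    have hlq := (hq.log hq0).pdWithin hs (m := 1) (i := i) (by norm_num)
    exact (ContDiff.contDiffOn (by fun_prop)).mul ((hp.of_le one_le_two).mul (hlq.sub hlp))
  · filter_upwards [pdWithin_eventuallyEq_pd (f := fun z => Real.log (q z)) (i := i) hx,
      pdWithin_eventuallyEq_pd (f := fun z => Real.log (p z)) (i := i) hx] with y hly hlx
    simp only [scoreFlux, hly, hlx]

lemma hasContinuousExtension_pd_scoreFlux (hs : UniqueDiffOn ℝ s) (hp : ContDiffOn ℝ 2 p s)
    (hq : ContDiffOn ℝ 2 q s) (hp0 : ∀ x ∈ s, p x ≠ 0) (hq0 : ∀ x ∈ s, q x ≠ 0)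
    (i : Fin d) :
    HasContinuousExtension s (pd i (scoreFlux p q i)) := by
  obtain ⟨Φ, hΦ, -, -, hΦeq⟩ := exists_contDiffOn_eventuallyEq_scoreFlux hs hp hq hp0 hq0 i
  exact (hasContinuousExtension_pd hΦ hs).congr fun x hx => (hΦeq x hx).pd_eq

end ScoreOnBox

section UnitCube

variable {p q : (Fin d → ℝ) → ℝ}

lemma uniqueDiffOn_unitCube : UniqueDiffOn ℝ (Icc (0 : Fin d → ℝ) 1) :=
  uniqueDiffOn_Icc_pi fun _ => zero_lt_one

lemma volume_frontier_unitCube : volume (frontier (Icc (0 : Fin d → ℝ) 1)) = 0 :=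
  (convex_Icc 0 1).addHaar_frontier volume

lemma integral_pd_scoreFlux_eq_zero (hp : ContDiffOn ℝ 2 p (Icc 0 1))
    (hq : ContDiffOn ℝ 2 q (Icc 0 1)) (hp0 : ∀ x ∈ Icc (0 : Fin d → ℝ) 1, p x ≠ 0)
    (hq0 : ∀ x ∈ Icc (0 : Fin d → ℝ) 1, q x ≠ 0) (i : Fin d) :
    ∫ x in Icc (0 : Fin d → ℝ) 1, pd i (scoreFlux p q i) x = 0 := by
  obtain ⟨Φ, hΦ, h0, h1, hΦeq⟩ :=
    exists_contDiffOn_eventuallyEq_scoreFlux uniqueDiffOn_unitCube hp hq hp0 hq0 i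
  rw [← integral_pd_eq_zero_of_eq_zero_on_faces (fun _ => zero_lt_one) hΦ i h0 h1]
  refine integral_congr_ae ?_
  filter_upwards [ae_restrict_mem_interior_of_null_frontier volume_frontier_unitCube] with x hx
  exact (hΦeq x hx).pd_eq

theorem integral_mul_hScore_sub_integral_mul_hScore (hp : ContDiffOn ℝ 2 p (Icc 0 1))
    (hq : ContDiffOn ℝ 2 q (Icc 0 1)) (hp0 : ∀ x ∈ Icc (0 : Fin d → ℝ) 1, p x ≠ 0)
    (hq0 : ∀ x ∈ Icc (0 : Fin d → ℝ) 1, q x ≠ 0) :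
    (∫ x in Icc (0 : Fin d → ℝ) 1, p x * hScore q x)
        - ∫ x in Icc (0 : Fin d → ℝ) 1, p x * hScore p x
      = (1 / 2) * ∫ x in Icc (0 : Fin d → ℝ) 1, weightedFisher p q x := by
  have hs := uniqueDiffOn_unitCube (d := d)
  have hfr := volume_frontier_unitCube (d := d)
  have hIq := (hasContinuousExtension_mul_hScore hs hp.continuousOn hq hq0).integrableOn
    isCompact_Icc hfr
  have hIp := (hasContinuousExtension_mul_hScore hs hp.continuousOn hp hp0).integrableOn
    isCompact_Icc hfr
  have hIF := (hasContinuousExtension_weightedFisher hs hp hq hp0 hq0).integrableOn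
    isCompact_Icc hfr
  have hIflux : ∀ i ∈ Finset.univ, IntegrableOn (pd i (scoreFlux p q i)) (Icc 0 1) :=
    fun i _ => (hasContinuousExtension_pd_scoreFlux hs hp hq hp0 hq0 i).integrableOn
      isCompact_Icc hfr
  calc (∫ x in Icc (0 : Fin d → ℝ) 1, p x * hScore q x)
        - ∫ x in Icc (0 : Fin d → ℝ) 1, p x * hScore p x
      = ∫ x in Icc (0 : Fin d → ℝ) 1, (p x * hScore q x - p x * hScore p x) :=
        (integral_sub hIq hIp).symm
    _ = ∫ x in Icc (0 : Fin d → ℝ) 1,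
          (weightedFisher p q x / 2 + ∑ i, pd i (scoreFlux p q i) x) := by
        refine integral_congr_ae ?_
        filter_upwards [ae_restrict_mem_interior_of_null_frontier hfr] with x hx
        have hx' := mem_interior_iff_mem_nhds.1 hx
        exact mul_hScore_sub_mul_hScore (hp.contDiffAt hx') (hq.contDiffAt hx')
          (hp0 x (interior_subset hx)) (hq0 x (interior_subset hx))
    _ = (1 / 2) * ∫ x in Icc (0 : Fin d → ℝ) 1, weightedFisher p q x := by
        rw [integral_add (hIF.div_const 2) (integrable_finsetSum _ hIflux),
          integral_finsetSum _ hIflux, integral_div]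
        rw [Finset.sum_eq_zero fun i _ => integral_pd_scoreFlux_eq_zero hp hq hp0 hq0 i]
        ring

theorem eqOn_of_integral_weightedFisher_eq_zero (hp : ContDiffOn ℝ 2 p (Icc 0 1))
    (hq : ContDiffOn ℝ 2 q (Icc 0 1)) (hppos : ∀ x ∈ Icc (0 : Fin d → ℝ) 1, 0 < p x)
    (hqpos : ∀ x ∈ Icc (0 : Fin d → ℝ) 1, 0 < q x)
    (hpint : ∫ x in Icc (0 : Fin d → ℝ) 1, p x = 1)
    (hqint : ∫ x in Icc (0 : Fin d → ℝ) 1, q x = 1)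
    (h : ∫ x in Icc (0 : Fin d → ℝ) 1, weightedFisher p q x = 0) :
    EqOn q p (Icc 0 1) := by
  have hp0 : ∀ x ∈ Icc (0 : Fin d → ℝ) 1, p x ≠ 0 := fun x hx => (hppos x hx).ne'
  have hq0 : ∀ x ∈ Icc (0 : Fin d → ℝ) 1, q x ≠ 0 := fun x hx => (hqpos x hx).ne'
  have hF := hasContinuousExtension_weightedFisher uniqueDiffOn_unitCube hp hq hp0 hq0
  have hF0 : EqOn (weightedFisher p q) 0 (interior (Icc 0 1)) :=
    eqOn_zero_interior_of_setIntegral_eq_zero measurableSet_Icc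
      (hF.integrableOn isCompact_Icc volume_frontier_unitCube)
      (fun x hx => weightedFisher_nonneg (hppos x hx).le) hF.continuousOn_interior h
  have hderiv : EqOn (fderiv ℝ fun y => Real.log (q y)) (fderiv ℝ fun y => Real.log (p y))
      (interior (Icc 0 1)) := fun x hx => by
    have hx' : ∀ i, 0 < x i ∧ x i < 1 := by
      simpa [interior_Icc_pi] using hx
    exact fderiv_eq_of_forall_pd_eq fun i => (pd_log_eq_of_weightedFisher_eq_zero hx'
      (hppos x (interior_subset hx)) (hF0 hx) i).symm
  obtain ⟨c, hc⟩ := isOpen_interior.exists_eq_add_of_fderiv_eq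
    (convex_Icc (0 : Fin d → ℝ) 1).interior.isPreconnected
    (((hq.log hq0).differentiableOn two_ne_zero).mono interior_subset)
    (((hp.log hp0).differentiableOn two_ne_zero).mono interior_subset) hderiv
  refine eqOn_of_eqOn_const_mul_of_setIntegral_eq_one (c := Real.exp c) measurableSet_Icc
    hp.continuousOn hq.continuousOn interior_subset
    (closure_interior_Icc_pi fun _ => zero_lt_one).ge (fun x hx => ?_) hpint hqint
  have hlog : Real.log (q x) = Real.log (p x) + c := hc hx
  rw [← Real.exp_log (hqpos x (interior_subset hx)), hlog, Real.exp_add,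
    Real.exp_log (hppos x (interior_subset hx)), mul_comm]

end UnitCube

/-- Proposition 1 (propriety of the bounded-domain Hyvärinen score): for strictly positive,
twice continuously differentiable probability densities `p, q` on `[0,1]^d`, the expected
score difference equals half the weighted Fisher divergence, hence
`∫ p·h(·,q) ≥ ∫ p·h(·,p)` with equality iff `q = p` on `[0,1]^d`. -/
theorem stmt0 {d : ℕ} (p q : (Fin d → ℝ) → ℝ)
    (hp : ContDiffOn ℝ 2 p (Set.Icc 0 1)) (hq : ContDiffOn ℝ 2 q (Set.Icc 0 1))
    (hppos : ∀ x ∈ Set.Icc (0 : Fin d → ℝ) 1, 0 < p x)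
    (hqpos : ∀ x ∈ Set.Icc (0 : Fin d → ℝ) 1, 0 < q x)
    (hpint : ∫ x in Set.Icc (0 : Fin d → ℝ) 1, p x = 1)
    (hqint : ∫ x in Set.Icc (0 : Fin d → ℝ) 1, q x = 1) :
    ((∫ x in Set.Icc (0 : Fin d → ℝ) 1, p x * hScore q x)
        - (∫ x in Set.Icc (0 : Fin d → ℝ) 1, p x * hScore p x)
      = (1/2) * ∫ x in Set.Icc (0 : Fin d → ℝ) 1,
          p x * ∑ i : Fin d, (x i)^2 * (1 - x i)^2
            * (pd i (fun y => Real.log (p y)) x - pd i (fun y => Real.log (q y)) x)^2)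
    ∧ (∫ x in Set.Icc (0 : Fin d → ℝ) 1, p x * hScore p x)
        ≤ (∫ x in Set.Icc (0 : Fin d → ℝ) 1, p x * hScore q x)
    ∧ ((∫ x in Set.Icc (0 : Fin d → ℝ) 1, p x * hScore q x)
          = (∫ x in Set.Icc (0 : Fin d → ℝ) 1, p x * hScore p x)
        ↔ Set.EqOn q p (Set.Icc 0 1)) := by
  have hdiff := integral_mul_hScore_sub_integral_mul_hScore hp hq
    (fun x hx => (hppos x hx).ne') (fun x hx => (hqpos x hx).ne')
  have hF : 0 ≤ ∫ x in Icc (0 : Fin d → ℝ) 1, weightedFisher p q x :=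
    setIntegral_nonneg measurableSet_Icc fun x hx => weightedFisher_nonneg (hppos x hx).le
  refine ⟨hdiff, by linarith, fun h => ?_, fun h => ?_⟩
  · exact eqOn_of_integral_weightedFisher_eq_zero hp hq hppos hqpos hpint hqint (by linarith)
  · refine integral_congr_ae ?_
    filter_upwards [ae_restrict_mem_interior_of_null_frontier volume_frontier_unitCube] with x hx
    rw [hScore_congr (eventuallyEq_of_mem (mem_interior_iff_mem_nhds.1 hx) h)]
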